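/- Let S^n = (S₁,…,Sₙ) be i.i.d. finite discrete random variables and Z^n = (Z₁,…,Zₙ) be any finite discrete random variables, and define U_i = (Z^{i−1}, S^{i−1}). Then H(Z^n | S^n) = ∑_{i=1}^{n} [H(Z_i | S_i, U_i) − I(U_i ; S_i)]. In particular ∑_{i=1}^{n} I(U_i ; S_i) ≤ ∑_{i=1}^{n} H(Z_i | S_i, U_i). -/

import Mathlib

/-!
Reveal the pairs `(Z_j, S_j)` one at a time: by the chain rule `H(Z^n, S^n)` telescopes into
increments `H(Z_i, S_i, U_i) - H(U_i)`, while independence of the `S_i` gives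
`H(S^n) = ∑ H(S_i)`. Termwise,
`H(Z_i | S_i, U_i) - I(U_i ; S_i) = H(Z_i, S_i, U_i) - H(U_i) - H(S_i)`,
which yields the identity; the inequality is `H(Z^n | S^n) ≥ 0`.
Entropies are compared through fibres: `H(f)` only depends on the partition of the sample space
induced by `f`, and refining that partition can only increase it.
-/

open scoped BigOperators

/-- Shannon entropy (in bits) of a finitely supported probability mass function. -/
noncomputable def ent {α : Type*} [Fintype α] (p : α → ℝ) : ℝ :=
  -∑ a, p a * Real.logb 2 (p a)

/-- Probability that the random variable `f` (under pmf `p` on `Ω`) takes the value `a`. -/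
noncomputable def prOf {Ω α : Type*} [Fintype Ω] [DecidableEq α]
    (p : Ω → ℝ) (f : Ω → α) (a : α) : ℝ :=
  ∑ w ∈ Finset.univ.filter (fun w => f w = a), p w

/-- Entropy of the push-forward of `p` under `f`. -/
noncomputable def entOf {Ω α : Type*} [Fintype Ω] [Fintype α] [DecidableEq α]
    (p : Ω → ℝ) (f : Ω → α) : ℝ :=
  ent (fun a => prOf p f a)

/-- Mutual information `I(f;g)`. -/
noncomputable def miOf {Ω α β : Type*} [Fintype Ω] [Fintype α] [Fintype β]
    [DecidableEq α] [DecidableEq β] (p : Ω → ℝ) (f : Ω → α) (g : Ω → β) : ℝ :=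
  entOf p f + entOf p g - entOf p (fun w => (f w, g w))

/-- Conditional entropy `H(f | h)`. -/
noncomputable def condEntOf {Ω α γ : Type*} [Fintype Ω] [Fintype α] [Fintype γ]
    [DecidableEq α] [DecidableEq γ] (p : Ω → ℝ) (f : Ω → α) (h : Ω → γ) : ℝ :=
  entOf p (fun w => (f w, h w)) - entOf p h

/-- Conditional mutual information `I(f;g | h)`. -/
noncomputable def cmiOf {Ω α β γ : Type*} [Fintype Ω] [Fintype α] [Fintype β] [Fintype γ]
    [DecidableEq α] [DecidableEq β] [DecidableEq γ]
    (p : Ω → ℝ) (f : Ω → α) (g : Ω → β) (h : Ω → γ) : ℝ :=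
  entOf p (fun w => (f w, h w)) + entOf p (fun w => (g w, h w)) - entOf p h
    - entOf p (fun w => (f w, g w, h w))

/-- `p` is a probability mass function. -/
def IsPMF {Ω : Type*} [Fintype Ω] (p : Ω → ℝ) : Prop :=
  (∀ w, 0 ≤ p w) ∧ ∑ w, p w = 1

/-- `f` and `g` are conditionally independent given `h` under `p`. -/
def CondIndepOf {Ω α β γ : Type*} [Fintype Ω]
    [DecidableEq α] [DecidableEq β] [DecidableEq γ]
    (p : Ω → ℝ) (f : Ω → α) (g : Ω → β) (h : Ω → γ) : Prop :=
  ∀ a b c, prOf p (fun w => (f w, g w, h w)) (a, b, c) * prOf p h c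
    = prOf p (fun w => (f w, h w)) (a, c) * prOf p (fun w => (g w, h w)) (b, c)

/-- `f` and `g` are independent under `p`. -/
def IndepOf {Ω α β : Type*} [Fintype Ω] [DecidableEq α] [DecidableEq β]
    (p : Ω → ℝ) (f : Ω → α) (g : Ω → β) : Prop :=
  ∀ a b, prOf p (fun w => (f w, g w)) (a, b) = prOf p f a * prOf p g b

/-- The "past" random variable `U_i = (Z^{i-1}, S^{i-1})`, encoded by masking coordinates
`≥ i` with `none`. -/
def Upast {Zt St : Type*} (n : ℕ) (i : Fin n) :
    ((Fin n → Zt) × (Fin n → St)) → ((Fin n → Option Zt) × (Fin n → Option St)) :=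
  fun w => (fun j => if (j : ℕ) < (i : ℕ) then some (w.1 j) else none,
            fun j => if (j : ℕ) < (i : ℕ) then some (w.2 j) else none)

section Entropy

variable {Ω α β : Type*} [Fintype Ω] [DecidableEq α] [DecidableEq β]

lemma prOf_comp [Fintype α] (p : Ω → ℝ) (f : Ω → α) (g : α → β) (b : β) :
    prOf p (fun w => g (f w)) b = ∑ a with g a = b, prOf p f a := by
  unfold prOf
  rw [Finset.sum_fiberwise_eq_sum_filter]
  simp only [Finset.mem_filter, Finset.mem_univ, true_and]

lemma prOf_apply_self_congr {p : Ω → ℝ} {f : Ω → α} {g : Ω → β}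
    (hfg : ∀ w w', f w = f w' ↔ g w = g w') (w : Ω) :
    prOf p f (f w) = prOf p g (g w) := by
  unfold prOf
  congr 1
  ext w'
  simp only [Finset.mem_filter, Finset.mem_univ, true_and, hfg]

lemma prOf_apply_self_mono {p : Ω → ℝ} (hp : ∀ w, 0 ≤ p w) {f : Ω → α} {g : Ω → β}
    (hfg : ∀ w w', f w = f w' → g w = g w') (w : Ω) :
    prOf p f (f w) ≤ prOf p g (g w) :=
  Finset.sum_le_sum_of_subset_of_nonneg
    (fun w' hw' => by simpa using hfg _ _ (Finset.mem_filter.1 hw').2) (fun w' _ _ => hp w')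

variable [Fintype α] [Fintype β]

lemma entOf_eq_sum (p : Ω → ℝ) (f : Ω → α) :
    entOf p f = -∑ w, p w * Real.logb 2 (prOf p f (f w)) := by
  rw [entOf, ent, ← Finset.sum_fiberwise Finset.univ f]
  congr 1
  refine Finset.sum_congr rfl fun a _ => ?_
  rw [prOf, Finset.sum_mul]
  refine Finset.sum_congr rfl fun w hw => ?_
  rw [(Finset.mem_filter.1 hw).2]
  rfl

lemma entOf_congr_of_fibers {p : Ω → ℝ} {f : Ω → α} {g : Ω → β}
    (hfg : ∀ w w', f w = f w' ↔ g w = g w') : entOf p f = entOf p g := by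
  simp only [entOf_eq_sum, prOf_apply_self_congr hfg]

lemma entOf_eq_zero_of_forall_eq {p : Ω → ℝ} (hp : ∑ w, p w = 1) {f : Ω → α}
    (hf : ∀ w w', f w = f w') : entOf p f = 0 := by
  have hone : ∀ w, prOf p f (f w) = 1 := fun w => by
    rw [prOf, Finset.filter_true_of_mem fun w' _ => hf w' w, hp]
  simp [entOf_eq_sum, hone]

lemma entOf_le_of_fibers {p : Ω → ℝ} (hp : ∀ w, 0 ≤ p w) {f : Ω → α} {g : Ω → β}
    (hfg : ∀ w w', f w = f w' → g w = g w') : entOf p g ≤ entOf p f := by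
  rw [entOf_eq_sum, entOf_eq_sum, neg_le_neg_iff]
  refine Finset.sum_le_sum fun w _ => ?_
  rcases (hp w).eq_or_lt with hw | hw
  · simp [← hw]
  have hpos : 0 < prOf p f (f w) :=
    hw.trans_le (Finset.single_le_sum (fun w' _ => hp w') (by simp))
  exact mul_le_mul_of_nonneg_left
    (Real.logb_le_logb_of_le one_lt_two hpos (prOf_apply_self_mono hp hfg w)) hw.le

lemma condEntOf_nonneg {p : Ω → ℝ} (hp : ∀ w, 0 ≤ p w) (f : Ω → α) (g : Ω → β) :
    0 ≤ condEntOf p f g :=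
  sub_nonneg.2 <| entOf_le_of_fibers hp fun _ _ h => congrArg Prod.snd h

end Entropy

lemma condEntOf_sub_miOf {Ω α β γ : Type*} [Fintype Ω] [Fintype α] [Fintype β] [Fintype γ]
    [DecidableEq α] [DecidableEq β] [DecidableEq γ] (p : Ω → ℝ) (f : Ω → α) (g : Ω → β)
    (u : Ω → γ) :
    condEntOf p f (fun w => (g w, u w)) - miOf p u g
      = entOf p (fun w => (f w, g w, u w)) - entOf p u - entOf p g := by
  have hswap : entOf p (fun w => (g w, u w)) = entOf p (fun w => (u w, g w)) :=
    entOf_congr_of_fibers fun _ _ => Prod.swap_inj.symm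
  rw [condEntOf, miOf, hswap]
  ring

section Product

variable {ι σ : Type*} [Fintype ι] [DecidableEq ι] [Fintype σ] {q : σ → ℝ}

lemma sum_pi_prod_mul_apply (hq : ∑ s, q s = 1) (i : ι) (L : σ → ℝ) :
    ∑ x : ι → σ, (∏ j, q (x j)) * L (x i) = ∑ s, q s * L s := by
  calc ∑ x : ι → σ, (∏ j, q (x j)) * L (x i)
      = ∑ x : ι → σ, ∏ j, q (x j) * (if j = i then L (x j) else 1) := by
        refine Finset.sum_congr rfl fun x _ => ?_
        rw [Finset.prod_mul_distrib, Finset.prod_ite_eq', if_pos (Finset.mem_univ i)]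
    _ = ∏ j, ∑ s, q s * (if j = i then L s else 1) :=
        (Fintype.prod_sum fun j s => q s * (if j = i then L s else 1)).symm
    _ = ∑ s, q s * L s := by
        simp [mul_ite, Finset.sum_ite_irrel, hq, Finset.prod_ite_eq']

lemma sum_pi_prod_filter_apply_eq [DecidableEq σ] (hq : ∑ s, q s = 1) (i : ι) (s : σ) :
    ∑ x : ι → σ with x i = s, ∏ j, q (x j) = q s := by
  simpa [Finset.sum_filter] using sum_pi_prod_mul_apply hq i (fun t => if t = s then 1 else 0)

lemma ent_pi_prod (hq : ∑ s, q s = 1) :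
    ent (fun x : ι → σ => ∏ j, q (x j)) = Fintype.card ι * ent q := by
  have hlog : ∀ x : ι → σ, (∏ j, q (x j)) * Real.logb 2 (∏ j, q (x j))
      = ∑ i, (∏ j, q (x j)) * Real.logb 2 (q (x i)) := by
    intro x
    by_cases h : ∀ j, q (x j) ≠ 0
    · rw [Real.logb_prod _ _ fun j _ => h j, Finset.mul_sum]
    · obtain ⟨j, hj⟩ := not_forall_not.1 h
      simp [Finset.prod_eq_zero (f := fun j => q (x j)) (Finset.mem_univ j) hj]
  have hcoord : ∀ i, ∑ x : ι → σ, (∏ j, q (x j)) * Real.logb 2 (q (x i))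
      = ∑ s, q s * Real.logb 2 (q s) :=
    fun i => sum_pi_prod_mul_apply hq i fun s => Real.logb 2 (q s)
  simp only [ent, hlog]
  rw [Finset.sum_comm]
  simp only [hcoord, Finset.sum_const, Finset.card_univ, nsmul_eq_mul, mul_neg]

variable {Ω : Type*} [Fintype Ω] [DecidableEq σ] {p : Ω → ℝ} {S : Ω → ι → σ}

lemma entOf_eq_card_mul_ent_of_iid (hq : ∑ s, q s = 1) (hS : ∀ x, prOf p S x = ∏ j, q (x j)) :
    entOf p S = Fintype.card ι * ent q := by
  simp only [entOf, hS, ent_pi_prod hq]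

lemma entOf_apply_eq_ent_of_iid (hq : ∑ s, q s = 1) (hS : ∀ x, prOf p S x = ∏ j, q (x j))
    (i : ι) : entOf p (fun w => S w i) = ent q := by
  have hmarg : ∀ s, prOf p (fun w => S w i) s = q s := fun s => by
    simp only [prOf_comp p S (fun x => x i), hS, sum_pi_prod_filter_apply_eq hq]
  simp only [entOf, hmarg]

end Product

section Chain

variable {Zt St : Type*} {n : ℕ}

-- `Upast n i` is `pastMask n i`; the mask is indexed by `k : ℕ` so that `k = n` reveals everything.
def pastMask (n k : ℕ) :
    ((Fin n → Zt) × (Fin n → St)) → ((Fin n → Option Zt) × (Fin n → Option St)) :=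
  fun w => (fun j => if (j : ℕ) < k then some (w.1 j) else none,
            fun j => if (j : ℕ) < k then some (w.2 j) else none)

lemma pastMask_eq_iff {k : ℕ} {w w' : (Fin n → Zt) × (Fin n → St)} :
    pastMask n k w = pastMask n k w' ↔
      ∀ j : Fin n, (j : ℕ) < k → w.1 j = w'.1 j ∧ w.2 j = w'.2 j := by
  simp only [pastMask, Prod.mk.injEq, funext_iff, imp_and, forall_and]
  refine and_congr ?_ ?_ <;> refine forall_congr' fun j => ?_ <;>
    by_cases hj : (j : ℕ) < k <;> simp [hj]

variable [Fintype Zt] [Fintype St] [DecidableEq Zt] [DecidableEq St]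
  {p : (Fin n → Zt) × (Fin n → St) → ℝ}

lemma entOf_pastMask_zero (hp : ∑ w, p w = 1) :
    entOf p (pastMask (Zt := Zt) (St := St) n 0) = 0 :=
  entOf_eq_zero_of_forall_eq hp fun _ _ =>
    pastMask_eq_iff.2 fun _ hj => absurd hj (Nat.not_lt_zero _)

lemma entOf_pastMask_self : entOf p (pastMask n n) = entOf p (fun w => (w.1, w.2)) :=
  entOf_congr_of_fibers fun w w' => by
    simp only [pastMask_eq_iff, Fin.is_lt, true_imp_iff, forall_and, Prod.mk.injEq, funext_iff]

lemma entOf_coord_Upast_eq_entOf_pastMask_succ (i : Fin n) :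
    entOf p (fun w => (w.1 i, w.2 i, Upast n i w)) = entOf p (pastMask n (i + 1)) :=
  entOf_congr_of_fibers fun w w' => by
    have hU : Upast n i w = Upast n i w' ↔ pastMask n i w = pastMask n i w' := Iff.rfl
    simp only [Prod.mk.injEq, hU, pastMask_eq_iff, Nat.lt_succ_iff_lt_or_eq, or_imp, forall_and,
      Fin.val_inj, forall_eq]
    tauto

lemma entOf_eq_sum_entOf_coord_Upast_sub (hp : ∑ w, p w = 1) :
    entOf p (fun w => (w.1, w.2))
      = ∑ i : Fin n, (entOf p (fun w => (w.1 i, w.2 i, Upast n i w)) - entOf p (Upast n i)) := by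
  have htel := Fin.sum_univ_eq_sum_range
    (fun k => entOf p (pastMask (Zt := Zt) (St := St) n (k + 1)) - entOf p (pastMask n k)) n
  rw [Finset.sum_range_sub (fun k => entOf p (pastMask n k)), entOf_pastMask_self,
    entOf_pastMask_zero hp, sub_zero] at htel
  rw [← htel]
  exact Finset.sum_congr rfl fun i _ => by rw [entOf_coord_Upast_eq_entOf_pastMask_succ]; rfl

end Chain

/-- For `S^n` i.i.d. and `U_i = (Z^{i-1}, S^{i-1})`:
`H(Z^n|S^n) = ∑ᵢ [H(Zᵢ|Sᵢ,Uᵢ) − I(Uᵢ;Sᵢ)]`, and in particular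
`∑ᵢ I(Uᵢ;Sᵢ) ≤ ∑ᵢ H(Zᵢ|Sᵢ,Uᵢ)`. -/
theorem stmt_4 {Zt St : Type*} [Fintype Zt] [Fintype St] [DecidableEq Zt] [DecidableEq St]
    (n : ℕ) (p : (Fin n → Zt) × (Fin n → St) → ℝ) (hp : IsPMF p)
    (q : St → ℝ) (hq : IsPMF q)
    (hiid : ∀ sv : Fin n → St, prOf p Prod.snd sv = ∏ i, q (sv i)) :
    condEntOf p Prod.fst Prod.snd
        = ∑ i : Fin n,
            (condEntOf p (fun w => w.1 i) (fun w => (w.2 i, Upast n i w))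
              - miOf p (Upast n i) (fun w => w.2 i))
    ∧ ∑ i : Fin n, miOf p (Upast n i) (fun w => w.2 i)
        ≤ ∑ i : Fin n, condEntOf p (fun w => w.1 i) (fun w => (w.2 i, Upast n i w)) := by
  have hcoord : ∀ i : Fin n, entOf p (fun w => w.2 i) = ent q :=
    entOf_apply_eq_ent_of_iid hq.2 hiid
  have hsnd : entOf p Prod.snd = n * ent q := by
    simpa using entOf_eq_card_mul_ent_of_iid hq.2 hiid
  have hchain : condEntOf p Prod.fst Prod.snd
      = ∑ i : Fin n,
          (condEntOf p (fun w => w.1 i) (fun w => (w.2 i, Upast n i w))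
            - miOf p (Upast n i) (fun w => w.2 i)) := by
    simp only [condEntOf_sub_miOf, hcoord, Finset.sum_sub_distrib, Finset.sum_const,
      Finset.card_univ, Fintype.card_fin, nsmul_eq_mul]
    rw [condEntOf, entOf_eq_sum_entOf_coord_Upast_sub hp.2, hsnd, Finset.sum_sub_distrib]
  refine ⟨hchain, ?_⟩
  have hnonneg := condEntOf_nonneg hp.1 Prod.fst Prod.snd
  rw [hchain, Finset.sum_sub_distrib] at hnonneg
  linarith
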